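/- arXiv:2011.07869 — 4 statements merged into one kernel-verified Lean document; each statement's English description precedes it below -/
import Mathlib

section
/- In the conflict graph on binary strings, two instances are in conflict if and only if they are linked by a monotone path: a sequence of instances of consecutive increasing sizes each pair of which is in conflict. -/
/-- `r` is the (0-indexed) position of the last `0` (= `false`) of the string `s`. -/
def LastZeroAt (s : List Bool) (r : ℕ) : Prop :=
  s[r]? = some false ∧ ∀ j, r < j → j < s.length → s[j]? = some true

/-- Instances `s` and `t` (binary strings, each containing a `0`) are in conflict:
`t` is strictly longer, has the same number of `1`s, and agrees with `s` on all
positions up to (and including) the last `0` of `s`. -/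
def Conflict (s t : List Bool) : Prop :=
  s.length < t.length ∧ s.count true = t.count true ∧
    ∃ r, LastZeroAt s r ∧ s.take (r + 1) = t.take (r + 1)

/-!
`Conflict` is transitive: the last `0` of `s` is also a `0` of the middle string `u`, so it
lies at or before the last `0` of `u`, and agreement on the prefixes propagates. Conversely,
write `s = p ++ 0 :: 1^j`; a conflicting `t` is `p ++ 0 :: d` where `d` has exactly `j` ones.
If `|t| > |s| + 1` then `d` has more than `j` letters, so `d = 1^k ++ 0 :: e` with `k ≤ j`, and
`u = p ++ 0 :: 1^k ++ 0 :: 1^(j - k)` has size `|s| + 1` and sits in conflict between `s` and `t`.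
Iterating this splitting yields the monotone path.
-/

open List

section Chain

variable {α : Type*} {R : α → α → Prop}

theorem rel_of_forall_lt_rel_succ [IsTrans α R] {J : ℕ → α} {n : ℕ}
    (h : ∀ i < n + 1, R (J i) (J (i + 1))) : R (J 0) (J (n + 1)) := by
  induction n with
  | zero => exact h 0 (by omega)
  | succ n ih =>
    exact _root_.trans (ih fun i hi ↦ h i (by omega)) (h (n + 1) (Nat.lt_succ_self _))

theorem exists_chain_of_exists_mid (f : α → ℕ)
    (hmid : ∀ a b, R a b → f a + 1 < f b → ∃ c, f c = f a + 1 ∧ R a c ∧ R c b) {b : α} :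
    ∀ (n : ℕ) (a : α), R a b → f b = f a + n + 1 →
      ∃ J : ℕ → α, J 0 = a ∧ J (n + 1) = b ∧ (∀ i ≤ n + 1, f (J i) = f a + i) ∧
        ∀ i < n + 1, R (J i) (J (i + 1)) := by
  intro n
  induction n with
  | zero =>
    intro a hab hf
    refine ⟨fun | 0 => a | _ + 1 => b, rfl, rfl, fun i hi ↦ ?_, fun i hi ↦ ?_⟩
    · interval_cases i <;> simp [hf]
    · obtain rfl : i = 0 := by omega
      exact hab
  | succ n ih =>
    intro a hab hf
    obtain ⟨c, hc, hac, hcb⟩ := hmid a b hab (by omega)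
    obtain ⟨J, hJ0, hJb, hJf, hJR⟩ := ih c hcb (by omega)
    refine ⟨fun | 0 => a | i + 1 => J i, rfl, hJb, fun i hi ↦ ?_, fun i hi ↦ ?_⟩
    · cases i with
      | zero => rfl
      | succ i => simp only [hJf i (by omega), hc]; omega
    · cases i with
      | zero => simpa [hJ0] using hac
      | succ i => exact hJR i (by omega)

end Chain

theorem exists_eq_replicate_true_append_false {d : List Bool} (h : false ∈ d) :
    ∃ k e, d = replicate k true ++ false :: e := by
  induction d with
  | nil => simp at h
  | cons b d ih =>
    cases b with
    | false => exact ⟨0, d, rfl⟩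
    | true =>
      obtain ⟨k, e, rfl⟩ := ih (by simpa using h)
      exact ⟨k + 1, e, rfl⟩

section LastZero

theorem lastZeroAt_append_replicate (p : List Bool) (j : ℕ) :
    LastZeroAt (p ++ false :: replicate j true) p.length := by
  refine ⟨by simp, fun i hi hlt ↦ ?_⟩
  simp only [length_append, length_cons, length_replicate] at hlt
  rw [getElem?_append_right (by omega), show i - p.length = (i - p.length - 1) + 1 by omega,
    getElem?_cons_succ, getElem?_replicate_of_lt (by omega)]

theorem LastZeroAt.eq_append {s : List Bool} {r : ℕ} (h : LastZeroAt s r) :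
    s = s.take r ++ false :: replicate (s.length - (r + 1)) true := by
  have hr : r < s.length := (List.getElem?_eq_some_iff.1 h.1).1
  have hlen : (s.take r).length = r := length_take_of_le hr.le
  apply ext_getElem?
  intro i
  rcases lt_trichotomy i r with hi | rfl | hi
  · rw [getElem?_append_left (by rw [hlen]; exact hi), getElem?_take_of_lt hi]
  · rw [h.1, getElem?_append_right hlen.le, hlen, Nat.sub_self]; rfl
  · rw [getElem?_append_right (by omega), hlen, show i - r = (i - r - 1) + 1 by omega,
      getElem?_cons_succ]
    by_cases his : i < s.length
    · rw [h.2 i hi his, getElem?_replicate_of_lt (by omega)]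
    · rw [getElem?_eq_none (by omega), getElem?_eq_none (by rw [length_replicate]; omega)]

theorem LastZeroAt.le_of_getElem?_eq_false {s : List Bool} {r i : ℕ} (h : LastZeroAt s r)
    (hi : s[i]? = some false) : i ≤ r := by
  by_contra! hri
  have := h.2 i hri (List.getElem?_eq_some_iff.1 hi).1
  simp_all

end LastZero

namespace Conflict

theorem append_replicate {p d : List Bool} {j : ℕ} (hd : d.count true = j)
    (hj : j < d.length) : Conflict (p ++ false :: replicate j true) (p ++ false :: d) := by
  refine ⟨by simpa using hj, by simp [hd], p.length, lastZeroAt_append_replicate p j, ?_⟩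
  simp [take_append]

theorem exists_eq_append {s t : List Bool} (h : Conflict s t) :
    ∃ p j d, s = p ++ false :: replicate j true ∧ t = p ++ false :: d ∧
      d.count true = j ∧ j < d.length := by
  obtain ⟨hlen, hcount, r, hr, htake⟩ := h
  have hs := hr.eq_append
  have hrs : r < s.length := (List.getElem?_eq_some_iff.1 hr.1).1
  have hst : s.take (r + 1) = s.take r ++ [false] := by
    conv_lhs => rw [hs]
    simp [take_append, hrs.le]
  have ht : t = s.take r ++ false :: t.drop (r + 1) := by
    rw [← singleton_append, ← append_assoc, ← hst, htake, take_append_drop]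
  refine ⟨s.take r, s.length - (r + 1), t.drop (r + 1), hs, ht, ?_, ?_⟩
  · rw [hs, ht] at hcount
    simpa [count_replicate] using hcount.symm
  · rw [length_drop]
    omega

protected theorem trans {s u t : List Bool} (h₁ : Conflict s u) (h₂ : Conflict u t) :
    Conflict s t := by
  obtain ⟨hl₁, hc₁, r, hr, hsu⟩ := h₁
  obtain ⟨hl₂, hc₂, r', hr', hut⟩ := h₂
  have hur : u[r]? = some false := by
    rw [← getElem?_take_of_lt (Nat.lt_succ_self r), ← hsu, getElem?_take_of_lt (Nat.lt_succ_self r),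
      hr.1]
  have hrr' : r ≤ r' := hr'.le_of_getElem?_eq_false hur
  refine ⟨hl₁.trans hl₂, hc₁.trans hc₂, r, hr, ?_⟩
  have hmin : min (r + 1) (r' + 1) = r + 1 := min_eq_left (by omega)
  rw [hsu, ← hmin, ← take_take, hut, take_take]

instance : IsTrans (List Bool) Conflict := ⟨fun _ _ _ ↦ Conflict.trans⟩

theorem exists_mid {s t : List Bool} (h : Conflict s t) (hlt : s.length + 1 < t.length) :
    ∃ u, u.length = s.length + 1 ∧ Conflict s u ∧ Conflict u t := by
  obtain ⟨p, j, d, rfl, rfl, hd, hj⟩ := h.exists_eq_append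
  have hfalse : false ∈ d := by
    have := count_false_add_count_true d
    rw [← count_pos_iff]
    omega
  obtain ⟨k, e, rfl⟩ := exists_eq_replicate_true_append_false hfalse
  simp only [count_append, count_replicate_self, count_cons_of_ne Bool.false_ne_true,
    length_append, length_cons, length_replicate] at hd hlt
  refine ⟨p ++ false :: (replicate k true ++ false :: replicate (j - k) true),
    by simp only [length_append, length_cons, length_replicate]; omega,
    append_replicate ?_ (by simp only [length_append, length_cons, length_replicate]; omega), ?_⟩
  · simp only [count_append, count_replicate_self, count_cons_of_ne Bool.false_ne_true]
    omega
  · simpa using append_replicate (p := p ++ false :: replicate k true) (d := e) (j := j - k)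
      (by omega) (by omega)

end Conflict

theorem conflict_iff_monotone_path_general (s t : List Bool)
    (hlen : s.length < t.length) :
    Conflict s t ↔
      ∃ J : ℕ → List Bool, J 0 = s ∧ J (t.length - s.length) = t ∧
        (∀ i ≤ t.length - s.length, (J i).length = s.length + i) ∧
        (∀ i, i < t.length - s.length → Conflict (J i) (J (i + 1))) := by
  obtain ⟨n, hn⟩ := Nat.exists_eq_add_of_lt hlen
  rw [show t.length - s.length = n + 1 by omega]
  constructor
  · exact fun h ↦ exists_chain_of_exists_mid length (fun _ _ ↦ Conflict.exists_mid) n s h hn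
  · rintro ⟨J, rfl, rfl, -, hJ⟩
    exact rel_of_forall_lt_rel_succ hJ

/-- Two instances are in conflict iff they are linked by a monotone path in the
conflict graph: a sequence of instances of consecutive increasing sizes, each
consecutive pair of which is in conflict. -/
theorem conflict_iff_monotone_path (s t : List Bool) (hs : false ∈ s) (ht : false ∈ t)
    (hlen : s.length < t.length) :
    Conflict s t ↔
      ∃ J : ℕ → List Bool, J 0 = s ∧ J (t.length - s.length) = t ∧
        (∀ i ≤ t.length - s.length, (J i).length = s.length + i) ∧
        (∀ i, i < t.length - s.length → Conflict (J i) (J (i + 1))) :=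
  conflict_iff_monotone_path_general s t hlen
end

section
/- Given an instance I of size n containing at least one 0, the instances of size n+1 in conflict with I are exactly the strings obtained by inserting one 0 into I at any position strictly after the last 0 of I (including at the end). Consequently, if I has suffix 0 followed by d-1 ones, then I has exactly d such children. -/
/-!
Past its last `0` at position `r`, an instance `I` is all `1`s. A conflicting `t` one letter
longer agrees with `I` up to `r` and has as many `1`s, so its part after `r` consists of the
`|I| - r - 1` ones of `I` and exactly one `0`: it is `I` with a `0` inserted at some position
`j ∈ (r, |I|]`. Distinct positions give distinct strings (compare them at the smaller one),
so there are `|I| - r` children, which is `d` when `I` ends in `0` followed by `d - 1` ones.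
-/

open List

namespace LastZeroAt

variable {s : List Bool} {r : ℕ}

theorem lt_length (h : LastZeroAt s r) : r < s.length :=
  (List.getElem?_eq_some_iff.mp h.1).1

theorem unique {r' : ℕ} (h : LastZeroAt s r) (h' : LastZeroAt s r') : r = r' := by
  by_contra hne
  rcases Nat.lt_or_gt_of_ne hne with hlt | hlt
  · simpa [h'.1] using h.2 r' hlt h'.lt_length
  · simpa [h.1] using h'.2 r hlt h.lt_length

theorem drop_succ_eq_replicate (h : LastZeroAt s r) :
    s.drop (r + 1) = replicate (s.length - (r + 1)) true := by
  refine eq_replicate_iff.mpr ⟨length_drop, fun b hb => ?_⟩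
  obtain ⟨i, hi⟩ := mem_iff_getElem?.mp hb
  rw [getElem?_drop] at hi
  have hlt : r + 1 + i < s.length := (List.getElem?_eq_some_iff.mp hi).1
  simpa [hi] using h.2 (r + 1 + i) (by omega) hlt

end LastZeroAt

theorem lastZeroAt_append_false_cons_replicate (u : List Bool) (m : ℕ) :
    LastZeroAt (u ++ false :: replicate m true) u.length := by
  refine ⟨by simp, fun j hj hjlen => ?_⟩
  obtain ⟨i, rfl⟩ : ∃ i, j = u.length + 1 + i := ⟨j - u.length - 1, by omega⟩
  simp only [length_append, length_cons, length_replicate] at hjlen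
  rw [getElem?_append_right (by omega), show u.length + 1 + i - u.length = i + 1 by omega,
    getElem?_cons_succ, getElem?_replicate_of_lt (by omega)]

theorem exists_eq_replicate_append_false_cons_replicate {l : List Bool}
    (h : l.count false = 1) : ∃ k m, l = replicate k true ++ false :: replicate m true := by
  induction l with
  | nil => simp at h
  | cons b l ih =>
    cases b with
    | false =>
      have hl : l.count false = 0 := by simpa using h
      refine ⟨0, l.length, ?_⟩
      simpa [eq_replicate_iff] using count_eq_zero.mp hl
    | true =>
      obtain ⟨k, m, rfl⟩ := ih (by simpa using h)
      exact ⟨k + 1, m, by simp [replicate_succ]⟩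

theorem take_append_false_cons_drop_append_replicate (p : List Bool) (k m : ℕ) :
    (p ++ replicate (k + m) true).take (p.length + k) ++
        false :: (p ++ replicate (k + m) true).drop (p.length + k) =
      p ++ replicate k true ++ false :: replicate m true := by
  rw [← replicate_append_replicate, take_append, drop_append]
  simp [take_of_length_le, drop_of_length_le]

section Insertion

variable {I : List Bool} {r : ℕ}

theorem conflict_take_append_false_cons_drop (hr : LastZeroAt I r) {j : ℕ} (hrj : r < j)
    (hj : j ≤ I.length) : Conflict I (I.take j ++ false :: I.drop j) := by
  refine ⟨by simp; omega, ?_, r, hr, ?_⟩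
  · have := congrArg (count true) (take_append_drop j I)
    simp only [count_append] at this
    simp [this]
  · rw [take_append_of_le_length (by simp; omega), take_take, min_eq_left hrj]

theorem Conflict.exists_eq_take_append_false_cons_drop (hr : LastZeroAt I r) {t : List Bool}
    (ht : t.length = I.length + 1) (hc : Conflict I t) :
    ∃ j, r < j ∧ j ≤ I.length ∧ t = I.take j ++ false :: I.drop j := by
  obtain ⟨-, hcount, r', hr', htake⟩ := hc
  obtain rfl := hr.unique hr'
  have hrI := hr.lt_length
  set p := I.take (r + 1)
  have hplen : p.length = r + 1 := by simp [p]; omega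
  have hI : I = p ++ replicate (I.length - (r + 1)) true := by
    rw [← hr.drop_succ_eq_replicate, take_append_drop]
  have htp : t = p ++ t.drop (r + 1) := by rw [htake, take_append_drop]
  -- `t.drop (r + 1)` has one more letter than `I.drop (r + 1)` but the same number of `1`s
  have hfalse : (t.drop (r + 1)).count false = 1 := by
    have hI' := congrArg (count true) hI
    have ht' := congrArg (count true) htp
    have := count_false_add_count_true (t.drop (r + 1))
    simp only [count_append, count_replicate_self, length_drop] at hI' ht' this
    omega
  obtain ⟨k, m, hs⟩ := exists_eq_replicate_append_false_cons_replicate hfalse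
  have hkm : I.length - (r + 1) = k + m := by
    have := congrArg length hs
    simp only [length_drop, length_append, length_replicate, length_cons] at this
    omega
  refine ⟨r + 1 + k, by omega, by omega, ?_⟩
  rw [hI, hkm, ← hplen, take_append_false_cons_drop_append_replicate, htp, hs, append_assoc]

theorem injOn_take_append_false_cons_drop (hr : LastZeroAt I r) :
    Set.InjOn (fun j => I.take j ++ false :: I.drop j) (Set.Ioc r I.length) := by
  intro j₁ h₁ j₂ h₂ heq
  by_contra hne
  wlog hlt : j₁ < j₂ generalizing j₁ j₂
  · exact this h₂ h₁ heq.symm (Ne.symm hne) (by omega)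
  -- at position `j₁` the first string carries the inserted `0`, the second a `1` of `I`
  have key := congrArg (·[j₁]?) heq
  simp only [Set.mem_Ioc] at h₁ h₂
  have hl₁ : (I.take j₁).length = j₁ := by simp; omega
  have hl₂ : (I.take j₂).length = j₂ := by simp; omega
  rw [getElem?_append_right hl₁.le, hl₁, Nat.sub_self, getElem?_append_left (by omega),
    getElem?_take_of_lt hlt, hr.2 j₁ h₁.1 (by omega)] at key
  simp at key

theorem ncard_conflict (hr : LastZeroAt I r) :
    {t : List Bool | t.length = I.length + 1 ∧ Conflict I t}.ncard = I.length - r := by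
  have hset : {t : List Bool | t.length = I.length + 1 ∧ Conflict I t} =
      (fun j => I.take j ++ false :: I.drop j) '' Set.Ioc r I.length := by
    ext t
    constructor
    · rintro ⟨ht, hc⟩
      obtain ⟨j, hrj, hj, rfl⟩ := hc.exists_eq_take_append_false_cons_drop hr ht
      exact ⟨j, ⟨hrj, hj⟩, rfl⟩
    · rintro ⟨j, ⟨hrj, hj⟩, rfl⟩
      exact ⟨by simp; omega, conflict_take_append_false_cons_drop hr hrj hj⟩
  rw [hset, (injOn_take_append_false_cons_drop hr).ncard_image, Set.ncard_eq_toFinset_card',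
    Set.toFinset_Ioc, Nat.card_Ioc]

end Insertion

/-- The instances of size `n+1` in conflict with an instance `I` of size `n` are
exactly the strings obtained by inserting one `0` into `I` at a position strictly
after the last `0` of `I` (including at the end); consequently, if `I` has suffix
`0` followed by `d-1` ones, it has exactly `d` such children. -/
theorem conflict_children (I : List Bool) (r : ℕ) (hr : LastZeroAt I r) :
    (∀ t : List Bool, t.length = I.length + 1 →
        (Conflict I t ↔ ∃ j, r < j ∧ j ≤ I.length ∧ t = I.take j ++ false :: I.drop j)) ∧
      ∀ d : ℕ, 1 ≤ d → (∀ u, I = u ++ false :: List.replicate (d - 1) true →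
        {t : List Bool | t.length = I.length + 1 ∧ Conflict I t}.ncard = d) := by
  refine ⟨fun t ht => ⟨(·.exists_eq_take_append_false_cons_drop hr ht), ?_⟩, fun d hd u hu => ?_⟩
  · rintro ⟨j, hrj, hj, rfl⟩
    exact conflict_take_append_false_cons_drop hr hrj hj
  · have hru : r = u.length := hr.unique (hu ▸ lastZeroAt_append_false_cons_replicate u (d - 1))
    rw [ncard_conflict hr, hru, hu]
    simp only [length_append, length_cons, length_replicate]
    omega
end

section
/- For any increasing sequence 0 ≤ t₁ < t₂ < ⋯ < 1 and p ∈ [0,1), the success probability of the time-threshold algorithm ALG_t on instances of size n in the random-order secretary problem with p-sampling is non-increasing in n. -/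
open MeasureTheory

/-- Values are indexed by `Fin n` in decreasing order of value. Element `i` (with
arrival times `τ`) is acceptable for `ALG_t`: it is online (`p ≤ τ i`), it is the
largest online value seen so far, and for some phase `m ≥ 1` with `t m ≤ τ i`,
fewer than `m` sampled elements have larger value. -/
def Acceptable (p : ℝ) (t : ℕ → ℝ) {n : ℕ} (τ : Fin n → ℝ) (i : Fin n) : Prop :=
  p ≤ τ i ∧ (∀ j : Fin n, p ≤ τ j → τ j < τ i → i < j) ∧
    ∃ m : ℕ, 1 ≤ m ∧ t m ≤ τ i ∧
      (Finset.univ.filter fun j : Fin n => j < i ∧ τ j < p).card < m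

/-- `ALG_t` succeeds: either the online set is empty, or the maximum online value
is acceptable and no acceptable element arrives before it. -/
def Success (p : ℝ) (t : ℕ → ℝ) {n : ℕ} (τ : Fin n → ℝ) : Prop :=
  (∀ i, τ i < p) ∨
    ∃ i : Fin n, p ≤ τ i ∧ (∀ j, p ≤ τ j → i ≤ j) ∧ Acceptable p t τ i ∧
      ∀ j, Acceptable p t τ j → τ i ≤ τ j

/-- The success probability of `ALG_t` on instances of size `n`: arrival times are
i.i.d. uniform on `[0,1]`. -/
noncomputable def SuccProb (p : ℝ) (t : ℕ → ℝ) (n : ℕ) : ENNReal :=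
  Measure.pi (fun _ : Fin n => volume.restrict (Set.Icc (0 : ℝ) 1))
    {τ | Success p t τ}


lemma card_aux (p : ℝ) {n : ℕ} (τ : Fin (n + 1) → ℝ) (j : Fin n) :
    (Finset.univ.filter fun k : Fin (n+1) => k < j.castSucc ∧ τ k < p)
      = (Finset.univ.filter fun k : Fin n => k < j ∧ τ k.castSucc < p).map
          Fin.castSuccEmb := by
  ext k
  simp only [Finset.mem_filter, Finset.mem_univ, true_and, Finset.mem_map,
    Fin.castSuccEmb, Function.Embedding.coeFn_mk]
  constructor
  · rintro ⟨hk1, hk2⟩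
    have hkn : (k : ℕ) < n := lt_of_lt_of_le hk1 (by simp [Fin.le_def])
    have hck : (⟨(k : ℕ), hkn⟩ : Fin n).castSucc = k := by
      apply Fin.ext; simp
    refine ⟨⟨k, hkn⟩, ⟨?_, ?_⟩, hck⟩
    · simpa [Fin.lt_def] using hk1
    · rw [hck]; exact hk2
  · rintro ⟨a, ⟨ha1, ha2⟩, rfl⟩
    exact ⟨Fin.castSucc_lt_castSucc_iff.mpr ha1, ha2⟩

lemma acceptable_castSucc (p : ℝ) (t : ℕ → ℝ) {n : ℕ} (τ : Fin (n + 1) → ℝ) (j : Fin n) :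
    Acceptable p t (fun k : Fin n => τ k.castSucc) j ↔ Acceptable p t τ j.castSucc := by
  unfold Acceptable
  have hcard : (Finset.univ.filter fun k : Fin (n+1) => k < j.castSucc ∧ τ k < p).card
      = (Finset.univ.filter fun k : Fin n => k < j ∧ τ k.castSucc < p).card := by
    rw [card_aux, Finset.card_map]
  constructor
  · rintro ⟨h1, h2, m, hm1, hm2, hm3⟩
    refine ⟨h1, ?_, m, hm1, hm2, by rwa [hcard]⟩
    intro k hk1 hk2
    rcases eq_or_ne k (Fin.last n) with rfl | hk
    · exact Fin.castSucc_lt_last j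
    · obtain ⟨k', rfl⟩ := Fin.exists_castSucc_eq.mpr hk
      exact Fin.castSucc_lt_castSucc_iff.mpr (h2 k' hk1 hk2)
  · rintro ⟨h1, h2, m, hm1, hm2, hm3⟩
    refine ⟨h1, ?_, m, hm1, hm2, by rwa [← hcard]⟩
    intro k hk1 hk2
    exact Fin.castSucc_lt_castSucc_iff.mp (h2 k.castSucc hk1 hk2)

lemma success_restrict (p : ℝ) (t : ℕ → ℝ) {n : ℕ} (τ : Fin (n + 1) → ℝ)
    (h : Success p t τ) : Success p t (fun j : Fin n => τ j.castSucc) := by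
  rcases h with h | ⟨i, hi1, hi2, hi3, hi4⟩
  · exact Or.inl fun j => h j.castSucc
  rcases eq_or_ne i (Fin.last n) with rfl | hne
  · left
    intro j
    by_contra hj
    push_neg at hj
    exact absurd (hi2 j.castSucc hj) (not_le.mpr (Fin.castSucc_lt_last j))
  · obtain ⟨i', rfl⟩ := Fin.exists_castSucc_eq.mpr hne
    right
    refine ⟨i', hi1, fun j hj => Fin.castSucc_le_castSucc_iff.mp (hi2 j.castSucc hj),
      (acceptable_castSucc p t τ i').mpr hi3, fun j hj =>
      hi4 j.castSucc ((acceptable_castSucc p t τ j).mp hj)⟩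

/-- For any increasing sequence `0 ≤ t₁ < t₂ < ⋯ < 1` and `p ∈ [0,1)`, the success
probability of the time-threshold algorithm `ALG_t` is non-increasing in `n`. -/
theorem succProb_antitone (p : ℝ) (hp : 0 ≤ p) (hp1 : p < 1) (t : ℕ → ℝ)
    (ht0 : 0 ≤ t 1) (htmono : ∀ i, 1 ≤ i → t i < t (i + 1))
    (htlt : ∀ i, 1 ≤ i → t i < 1) :
    ∀ n : ℕ, SuccProb p t (n + 1) ≤ SuccProb p t n := by
  intro n
  set μ0 : Measure ℝ := volume.restrict (Set.Icc (0 : ℝ) 1) with hμ0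
  have hμ0univ : μ0 Set.univ = 1 := by
    simp [hμ0, Real.volume_Icc]
  set R : (Fin (n + 1) → ℝ) → (Fin n → ℝ) := fun τ j => τ j.castSucc with hR
  have hsub : {τ : Fin (n + 1) → ℝ | Success p t τ}
      ⊆ R ⁻¹' {σ : Fin n → ℝ | Success p t σ} :=
    fun τ h => success_restrict p t τ h
  have hmeas : Measurable R := measurable_pi_iff.2 fun j => measurable_pi_apply _
  have hmap : (Measure.pi fun _ : Fin (n + 1) => μ0).map R
      = Measure.pi fun _ : Fin n => μ0 := by
    have h1 := measurePreserving_piFinSuccAbove (fun _ : Fin (n + 1) => μ0) (Fin.last n)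
    have hc : R = (fun q : ℝ × (Fin n → ℝ) => q.2)
        ∘ (MeasurableEquiv.piFinSuccAbove (fun _ => ℝ) (Fin.last n)) := by
      funext τ j
      simp [hR, MeasurableEquiv.piFinSuccAbove_apply, Fin.succAbove_last, Fin.init]
    rw [hc, ← Measure.map_map measurable_snd (MeasurableEquiv.measurable _),
      h1.map_eq, Measure.map_snd_prod, hμ0univ, one_smul]
  calc SuccProb p t (n + 1)
      ≤ (Measure.pi fun _ : Fin (n + 1) => μ0) (R ⁻¹' {σ | Success p t σ}) :=
        measure_mono hsub
    _ ≤ ((Measure.pi fun _ : Fin (n + 1) => μ0).map R) {σ | Success p t σ} :=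
        Measure.le_map_apply hmeas.aemeasurable _
    _ = SuccProb p t n := by rw [hmap]; rfl
end

section
/- In the random-order model with uniform arrival times, let values be indexed in decreasing order α₁ > ⋯ > α_n. Then the probability that V is empty or that max V = α_i and α_i arrives after time max{p, t_i} equals p^n + Σ_{i=1}^n p^{i-1}(1 - max{p, t_i}). -/
open MeasureTheory

/-- Values indexed by `Fin n` in decreasing order (`i = 0` is the largest), with
i.i.d. uniform `[0,1]` arrival times. The probability that the online set is empty,
or that the maximum online value is the `(i+1)`-th largest and arrives after time
`max{p, t_{i+1}}`, equals `p^n + Σ_{i} p^i (1 - max{p, t_{i+1}})`. -/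
theorem prob_maxV_acceptable (p : ℝ) (hp : 0 ≤ p) (hp1 : p < 1) (t : ℕ → ℝ)
    (ht0 : 0 ≤ t 1) (htmono : ∀ i, 1 ≤ i → t i < t (i + 1))
    (htlt : ∀ i, 1 ≤ i → t i < 1) (n : ℕ) :
    Measure.pi (fun _ : Fin n => volume.restrict (Set.Icc (0 : ℝ) 1))
        {τ : Fin n → ℝ |
          (∀ i, τ i < p) ∨
            ∃ i : Fin n, (∀ j, j < i → τ j < p) ∧ max p (t ((i : ℕ) + 1)) ≤ τ i} =
      ENNReal.ofReal
        (p ^ n + ∑ i : Fin n, p ^ (i : ℕ) * (1 - max p (t ((i : ℕ) + 1)))) := by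
  classical
  set μ := volume.restrict (Set.Icc (0 : ℝ) 1) with hμdef
  set m : ℕ → ℝ := fun i => max p (t (i + 1)) with hmdef
  have hmp : ∀ i : ℕ, p ≤ m i := fun i => le_max_left _ _
  have hm0 : ∀ i : ℕ, 0 ≤ m i := fun i => le_trans hp (hmp i)
  have hm1 : ∀ i : ℕ, m i < 1 := fun i => max_lt hp1 (htlt (i + 1) (by omega))
  -- basic measure computations
  have hIio : μ (Set.Iio p) = ENNReal.ofReal p := by
    rw [hμdef, Measure.restrict_apply measurableSet_Iio]
    have he : Set.Iio p ∩ Set.Icc 0 1 = Set.Ico 0 p := by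
      ext x
      simp only [Set.mem_inter_iff, Set.mem_Iio, Set.mem_Icc, Set.mem_Ico]
      constructor
      · rintro ⟨h1, h2, _⟩; exact ⟨h2, h1⟩
      · rintro ⟨h1, h2⟩; exact ⟨h2, h1, le_of_lt (lt_of_lt_of_le h2 hp1.le)⟩
    rw [he, Real.volume_Ico, sub_zero]
  have hIci : ∀ i : ℕ, μ (Set.Ici (m i)) = ENNReal.ofReal (1 - m i) := by
    intro i
    rw [hμdef, Measure.restrict_apply measurableSet_Ici]
    have he : Set.Ici (m i) ∩ Set.Icc 0 1 = Set.Icc (m i) 1 := by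
      ext x
      simp only [Set.mem_inter_iff, Set.mem_Ici, Set.mem_Icc]
      constructor
      · rintro ⟨h1, _, h3⟩; exact ⟨h1, h3⟩
      · rintro ⟨h1, h2⟩; exact ⟨h1, le_trans (hm0 i) h1, h2⟩
    rw [he, Real.volume_Icc]
  have huniv : μ Set.univ = 1 := by
    rw [hμdef, Measure.restrict_apply_univ, Real.volume_Icc]
    norm_num
  -- the cylinder sets
  set s : Fin n → Fin n → Set ℝ := fun i j =>
    if j < i then Set.Iio p else if j = i then Set.Ici (m i) else Set.univ with hsdef
  set B : Fin n → Set (Fin n → ℝ) :=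
    fun i => {τ | (∀ j, j < i → τ j < p) ∧ m i ≤ τ i} with hBdef
  set A : Set (Fin n → ℝ) := {τ | ∀ i, τ i < p} with hAdef
  have hBpi : ∀ i, B i = Set.pi Set.univ (s i) := by
    intro i
    ext τ
    simp only [hBdef, hsdef, Set.mem_setOf_eq, Set.mem_pi, Set.mem_univ, true_implies]
    constructor
    · rintro ⟨h1, h2⟩ j
      by_cases hj : j < i
      · simp [hj, h1 j hj]
      · by_cases hj' : j = i
        · subst hj'; simp [hj, h2]
        · simp [hj, hj']
    · intro h
      refine ⟨fun j hj => ?_, ?_⟩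
      · have := h j; simpa [hj] using this
      · have := h i; simpa using this
  have hApi : A = Set.pi Set.univ (fun _ => Set.Iio p) := by
    ext τ; simp [hAdef]
  have hsmeas : ∀ i j, MeasurableSet (s i j) := by
    intro i j
    simp only [hsdef]
    split
    · exact measurableSet_Iio
    · split
      · exact measurableSet_Ici
      · exact MeasurableSet.univ
  have hBmeas : ∀ i, MeasurableSet (B i) := by
    intro i; rw [hBpi i]
    exact MeasurableSet.univ_pi (hsmeas i)
  -- disjointness
  have hABdisj : Disjoint A (⋃ i, B i) := by
    rw [Set.disjoint_left]
    intro τ hA hB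
    simp only [Set.mem_iUnion] at hB
    obtain ⟨i, hi⟩ := hB
    exact absurd (hA i) (not_lt.2 (le_trans (hmp i) hi.2))
  have hBdisj : Pairwise (Function.onFun Disjoint B) := by
    intro i j hij
    have key : ∀ a b : Fin n, a < b → Disjoint (B a) (B b) := by
      intro a b hab
      rw [Set.disjoint_left]
      intro τ ha hb
      exact absurd (hb.1 a hab) (not_lt.2 (le_trans (hmp a) ha.2))
    rcases lt_or_gt_of_ne hij with h | h
    · exact key i j h
    · exact (key j i h).symm
  -- measure of B i
  have hμs : ∀ i j : Fin n, μ (s i j) =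
      if j < i then ENNReal.ofReal p else if j = i then ENNReal.ofReal (1 - m i) else 1 := by
    intro i j
    simp only [hsdef]
    split
    · exact hIio
    · split
      · exact hIci i
      · exact huniv
  have hcard : ∀ i : Fin n, (Finset.univ.filter (fun j : Fin n => j < i)).card = (i : ℕ) := by
    intro i
    have : Finset.univ.filter (fun j : Fin n => j < i) = Finset.Iio i := by
      ext j; simp
    rw [this, Fin.card_Iio]
  have hBmeasure : ∀ i, Measure.pi (fun _ : Fin n => μ) (B i) =
      ENNReal.ofReal p ^ (i : ℕ) * ENNReal.ofReal (1 - m i) := by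
    intro i
    rw [hBpi i, Measure.pi_pi]
    have hprod : ∀ j : Fin n, μ (s i j) =
        (if j < i then ENNReal.ofReal p else 1) *
        (if j = i then ENNReal.ofReal (1 - m i) else 1) := by
      intro j
      rw [hμs i j]
      by_cases h1 : j < i
      · have : j ≠ i := ne_of_lt h1
        simp [h1, this]
      · by_cases h2 : j = i
        · simp [h1, h2]
        · simp [h1, h2]
    simp_rw [hprod]
    rw [Finset.prod_mul_distrib]
    congr 1
    · rw [Finset.prod_ite, Finset.prod_const, Finset.prod_const, one_pow, mul_one]
      congr 1
      exact hcard i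
    · rw [Finset.prod_ite_eq' Finset.univ i (fun _ => ENNReal.ofReal (1 - m i))]
      simp
  have hAmeasure : Measure.pi (fun _ : Fin n => μ) A = ENNReal.ofReal p ^ n := by
    rw [hApi, Measure.pi_pi]
    simp [hIio]
  -- decompose the event
  have hset : {τ : Fin n → ℝ |
      (∀ i, τ i < p) ∨
        ∃ i : Fin n, (∀ j, j < i → τ j < p) ∧ max p (t ((i : ℕ) + 1)) ≤ τ i} =
      A ∪ ⋃ i, B i := by
    ext τ
    simp only [Set.mem_setOf_eq, Set.mem_union, Set.mem_iUnion, hAdef, hBdef, hmdef]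
  rw [hset, measure_union hABdisj (MeasurableSet.iUnion hBmeas),
    measure_iUnion hBdisj hBmeas, hAmeasure]
  simp_rw [hBmeasure]
  rw [tsum_fintype]
  -- arithmetic
  have hsum_nonneg : ∀ i ∈ Finset.univ, 0 ≤ p ^ ((i : Fin n) : ℕ) * (1 - m ((i : Fin n) : ℕ)) := by
    intro i _
    exact mul_nonneg (pow_nonneg hp _) (by linarith [hm1 (i : ℕ)])
  rw [ENNReal.ofReal_add (pow_nonneg hp n) (Finset.sum_nonneg hsum_nonneg),
    ENNReal.ofReal_pow hp, ENNReal.ofReal_sum_of_nonneg hsum_nonneg]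
  congr 1
  refine Finset.sum_congr rfl fun i _ => ?_
  rw [ENNReal.ofReal_mul (pow_nonneg hp _), ENNReal.ofReal_pow hp]
end
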